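/- Suppose g and h are conjugates of s_1 = bwb in G = ℤ/2 * ℤ/3 satisfying l(gh) < max(l(g), l(h)), and assume at least one of g, h is long. Then l(g) ≠ l(h). If l(g) < l(h), then g' := ghg⁻¹ and h' := g are conjugates of s_1 satisfying g'h' = gh and l(g') + l(h') < l(g) + l(h). If instead l(h) < l(g), then the same conclusions hold for g' := h and h' := h⁻¹gh. -/

import Mathlib

/-- `G = ℤ/2 * ℤ/3`, the free product of cyclic groups of orders 2 and 3
(isomorphic to `PSL(2,ℤ)`). -/
abbrev G23 := Monoid.Coprod (Multiplicative (ZMod 2)) (Multiplicative (ZMod 3))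

/-- The generator `w` of the `ℤ/2` factor. -/
def w : G23 := Monoid.Coprod.inl (Multiplicative.ofAdd (1 : ZMod 2))

/-- The generator `b` of the `ℤ/3` factor. -/
def b : G23 := Monoid.Coprod.inr (Multiplicative.ofAdd (1 : ZMod 3))

/-- `s₀ = wb²`. -/
def s0 : G23 := w * b ^ 2

/-- `s₁ = bwb`. -/
def s1 : G23 := b * w * b

/-- `s₂ = b²w`. -/
def s2 : G23 := b ^ 2 * w

/-- The letters `w`, `b`, `b²` from which reduced expressions are built. -/
inductive Letter : Type
  | w : Letter
  | b : Letter
  | b2 : Letter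
deriving DecidableEq

/-- Evaluation of a letter in `G23`. -/
def Letter.eval : Letter → G23
  | Letter.w => _root_.w
  | Letter.b => _root_.b
  | Letter.b2 => _root_.b ^ 2

/-- The formal inverse of a letter (`w⁻¹ = w`, `b⁻¹ = b²`, `(b²)⁻¹ = b`). -/
def Letter.inv : Letter → Letter
  | Letter.w => Letter.w
  | Letter.b => Letter.b2
  | Letter.b2 => Letter.b

/-- Evaluation of a word in the letters `w`, `b`, `b²`. -/
def wordEval (L : List Letter) : G23 := (L.map Letter.eval).prod

/-- A word is reduced if no two consecutive letters are both equal to `w` or both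
powers of `b`; i.e. the letters alternate between `w` and powers of `b`. -/
def Reduced (L : List Letter) : Prop :=
  List.Chain' (fun x y => x = Letter.w ↔ ¬ y = Letter.w) L

/-- The length `l(a)` of an element of `G23`: the number of letters in its reduced
expression (`l(1) = 0`). -/
noncomputable def len (g : G23) : ℕ :=
  sInf {n : ℕ | ∃ L : List Letter, Reduced L ∧ wordEval L = g ∧ L.length = n}

/-- The short conjugates of `s₁`. -/
def shortSet : Set G23 := {s0, s1, s2}


/-!
Letting `G23` act on reduced words (prepend a letter, then cancel or merge at the front) shows
that every element has a unique reduced word. The conjugates of `s₁` are then `s₀, s₁, s₂` and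
the reduced words `U b w b U⁻¹` with `U` ending in `w`, of length `2|U| + 3`.

If `l(gh) < l(h)`, more than half of the word of `g` cancels against the word of `h`. For long
`h = U s₁ U⁻¹` this forces `l(gU) < |U|`, so `ghg⁻¹ = (gU) s₁ (gU)⁻¹` is shorter than `h`. When `g`
is long as well, the cancelled part `V b² w` of `U` would clash with the middle `b w b` of the word
of `h` if `|V| = |U|`, so `l(g) ≠ l(h)`. The case `l(h) < l(g)` follows by applying the
anti-automorphism fixing `w` and `b`, which reverses words.
-/

theorem w_sq : w ^ 2 = 1 := by
  simp only [w, ← map_pow]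
  exact map_one _

theorem b_pow_three : b ^ 3 = 1 := by
  simp only [b, ← map_pow]
  exact map_one _

@[simp] theorem w_mul_w : w * w = 1 := by rw [← pow_two, w_sq]
@[simp] theorem b_mul_b : b * b = b ^ 2 := (pow_two b).symm
@[simp] theorem b_mul_b_sq : b * b ^ 2 = 1 := by rw [← pow_succ', b_pow_three]
@[simp] theorem b_sq_mul_b : b ^ 2 * b = 1 := by rw [← pow_succ, b_pow_three]
@[simp] theorem b_sq_mul_b_sq : b ^ 2 * b ^ 2 = b := by
  rw [← pow_add, show 2 + 2 = 3 + 1 from rfl, pow_add, b_pow_three, one_mul, pow_one]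

@[simp] theorem w_mul_w_mul (x : G23) : w * (w * x) = x := by rw [← mul_assoc]; simp
@[simp] theorem b_mul_b_mul (x : G23) : b * (b * x) = b ^ 2 * x := by rw [← mul_assoc]; simp
@[simp] theorem b_mul_b_sq_mul (x : G23) : b * (b ^ 2 * x) = x := by rw [← mul_assoc]; simp
@[simp] theorem b_sq_mul_b_mul (x : G23) : b ^ 2 * (b * x) = x := by rw [← mul_assoc]; simp
@[simp] theorem b_sq_mul_b_sq_mul (x : G23) : b ^ 2 * (b ^ 2 * x) = b * x := by
  rw [← mul_assoc]; simp

@[simp] theorem w_inv : w⁻¹ = w := inv_eq_of_mul_eq_one_left w_mul_w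
@[simp] theorem b_inv : b⁻¹ = b ^ 2 := inv_eq_of_mul_eq_one_left b_sq_mul_b
@[simp] theorem b_sq_inv : (b ^ 2)⁻¹ = b := inv_eq_of_mul_eq_one_left b_mul_b_sq

namespace Letter

theorem eval_inv (t : Letter) : t.inv.eval = t.eval⁻¹ := by
  cases t <;> simp [inv, eval]

theorem inv_inv (t : Letter) : t.inv.inv = t := by
  cases t <;> rfl

end Letter

@[simp]
theorem wordEval_nil : wordEval [] = 1 := rfl

@[simp]
theorem wordEval_cons (t : Letter) (L : List Letter) :
    wordEval (t :: L) = t.eval * wordEval L := by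
  simp [wordEval]

@[simp]
theorem wordEval_append (L M : List Letter) :
    wordEval (L ++ M) = wordEval L * wordEval M := by
  simp [wordEval]

theorem reduced_iff_isChain {L : List Letter} :
    Reduced L ↔ L.IsChain (fun x y => x = .w ↔ ¬ y = .w) :=
  Iff.rfl

theorem reduced_nil : Reduced [] := List.isChain_nil

theorem reduced_singleton (t : Letter) : Reduced [t] := List.isChain_singleton t

theorem reduced_cons_cons {t s : Letter} {L : List Letter} :
    Reduced (t :: s :: L) ↔ (t = .w ↔ ¬ s = .w) ∧ Reduced (s :: L) :=
  List.isChain_cons_cons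

theorem Reduced.of_cons {t : Letter} {L : List Letter} (h : Reduced (t :: L)) : Reduced L :=
  h.tail

theorem Reduced.of_append_left {L M : List Letter} (h : Reduced (L ++ M)) : Reduced L :=
  (List.isChain_append.mp h).1

theorem Reduced.append_cons {L M : List Letter} {t : Letter} (hL : Reduced (L ++ [t]))
    (hM : Reduced (t :: M)) : Reduced (L ++ t :: M) := by
  have hL' := List.isChain_append.mp hL
  exact List.isChain_append.mpr ⟨hL'.1, hM, fun x hx y hy => hL'.2.2 x hx y (by simpa using hy)⟩

theorem Reduced.replace {L M : List Letter} {t z : Letter} (h : Reduced (L ++ t :: M))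
    (ht : t ≠ .w) (hz : z ≠ .w) : Reduced (L ++ z :: M) := by
  simp only [reduced_iff_isChain, List.isChain_append, List.isChain_cons, List.head?_cons,
    Option.mem_def, Option.some.injEq] at h ⊢
  refine ⟨h.1, ⟨fun y hy => ?_, h.2.1.2⟩, fun x hx y hy => ?_⟩
  · simpa [ht, hz] using h.2.1.1 y hy
  · subst hy; simpa [ht, hz] using h.2.2 x hx t rfl

def rcons : Letter → List Letter → List Letter
  | .w, .w :: L => L
  | .b, .b :: L => .b2 :: L
  | .b, .b2 :: L => L
  | .b2, .b :: L => L
  | .b2, .b2 :: L => .b :: L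
  | t, L => t :: L

theorem wordEval_rcons (t : Letter) (L : List Letter) :
    wordEval (rcons t L) = t.eval * wordEval L := by
  rcases L with _ | ⟨s, L⟩
  · cases t <;> simp [rcons]
  · cases t <;> cases s <;>
      simp [rcons, Letter.eval]

theorem rcons_of_reduced {t : Letter} {L : List Letter} (h : Reduced (t :: L)) :
    rcons t L = t :: L := by
  rcases L with _ | ⟨s, L⟩
  · cases t <;> rfl
  · have := (reduced_cons_cons.mp h).1
    cases t <;> cases s <;> simp_all [rcons]

theorem reduced_rcons {L : List Letter} (t : Letter) (h : Reduced L) : Reduced (rcons t L) := by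
  rcases L with _ | ⟨s, L⟩
  · cases t <;> exact reduced_singleton _
  by_cases hts : Reduced (t :: s :: L)
  · rwa [rcons_of_reduced hts]
  rw [reduced_cons_cons] at hts
  cases t <;> cases s <;> simp only [_root_.rcons] <;> simp_all <;>
    first | exact h.of_cons | exact Reduced.replace (L := []) h (by decide) (by decide)

theorem rcons_rcons_inv {L : List Letter} (t : Letter) (h : Reduced L) :
    rcons t (rcons t.inv L) = L := by
  rcases L with _ | ⟨s, _ | ⟨u, L⟩⟩ <;> cases t <;> try cases s
  all_goals try cases u
  all_goals simp_all [rcons, Letter.inv, reduced_cons_cons]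

theorem rcons_b_rcons_b {L : List Letter} (h : Reduced L) :
    rcons .b (rcons .b L) = rcons .b2 L := by
  rcases L with _ | ⟨s, _ | ⟨u, L⟩⟩ <;> try cases s
  all_goals try cases u
  all_goals simp_all [rcons, reduced_cons_cons]

theorem length_rcons_le (t : Letter) (L : List Letter) : (rcons t L).length ≤ L.length + 1 := by
  rcases L with _ | ⟨s, L⟩ <;> cases t <;> try cases s
  all_goals (simp only [rcons, List.length_cons, List.length_nil]; omega)

def zmodPowHom {M : Type*} [Monoid M] (n : ℕ) [NeZero n] (x : M) (hx : x ^ n = 1) :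
    Multiplicative (ZMod n) →* M where
  toFun a := x ^ a.toAdd.val
  map_one' := by simp
  map_mul' a c := by simp [ZMod.val_add, pow_add, ← pow_eq_pow_mod _ hx]

def ReducedWord : Type := {L : List Letter // Reduced L}

def ReducedWord.rcons (t : Letter) : Function.End ReducedWord :=
  fun L => ⟨_root_.rcons t L.1, reduced_rcons t L.2⟩

theorem ReducedWord.rcons_mul_rcons_inv (t : Letter) : rcons t * rcons t.inv = 1 :=
  funext fun L => Subtype.ext (rcons_rcons_inv t L.2)

theorem ReducedWord.rcons_b_sq : rcons .b ^ 2 = rcons .b2 :=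
  funext fun L => Subtype.ext (rcons_b_rcons_b L.2)

def wordAction : G23 →* Function.End ReducedWord :=
  Monoid.Coprod.lift
    (zmodPowHom 2 (.rcons .w) (by rw [pow_two]; exact ReducedWord.rcons_mul_rcons_inv .w))
    (zmodPowHom 3 (.rcons .b) (by
      rw [pow_succ, ReducedWord.rcons_b_sq]; exact ReducedWord.rcons_mul_rcons_inv .b2))

theorem wordAction_eval (t : Letter) : wordAction t.eval = .rcons t := by
  have hw : wordAction w = .rcons .w := by
    rw [wordAction, w, Monoid.Coprod.lift_apply_inl]; exact pow_one _
  have hb : wordAction b = .rcons .b := by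
    rw [wordAction, b, Monoid.Coprod.lift_apply_inr]; exact pow_one _
  cases t
  · exact hw
  · exact hb
  · rw [Letter.eval, map_pow, hb, ReducedWord.rcons_b_sq]

theorem wordEval_wordAction (g : G23) (L : ReducedWord) :
    wordEval (wordAction g L).1 = g * wordEval L.1 := by
  have letter (t : Letter) (L : ReducedWord) :
      wordEval (wordAction t.eval L).1 = t.eval * wordEval L.1 := by
    rw [wordAction_eval]; exact wordEval_rcons t L.1
  induction g using Monoid.Coprod.induction_on generalizing L with
  | inl m =>
    obtain rfl | rfl : m = 1 ∨ m = .ofAdd 1 := by revert m; decide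
    exacts [by simp only [map_one, one_mul]; rfl, letter .w L]
  | inr n =>
    obtain rfl | rfl | rfl : n = 1 ∨ n = .ofAdd 1 ∨ n = .ofAdd 1 * .ofAdd 1 := by
      revert n; decide
    · simp only [map_one, one_mul]; rfl
    · exact letter .b L
    · have := letter .b2 L
      simp only [Letter.eval, pow_two, map_mul] at this ⊢
      exact this
  | mul x y hx hy =>
    rw [map_mul, Function.End.mul_def]
    exact (hx _).trans (by rw [hy, mul_assoc])

def normalForm (g : G23) : List Letter := (wordAction g ⟨[], reduced_nil⟩).1

theorem wordEval_normalForm (g : G23) : wordEval (normalForm g) = g :=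
  (wordEval_wordAction g _).trans (mul_one g)

theorem reduced_normalForm (g : G23) : Reduced (normalForm g) := (wordAction g _).2

theorem normalForm_eval_mul (t : Letter) (g : G23) :
    normalForm (t.eval * g) = rcons t (normalForm g) := by
  simp only [normalForm, map_mul, wordAction_eval]; rfl

theorem normalForm_wordEval {L : List Letter} (h : Reduced L) : normalForm (wordEval L) = L := by
  induction L with
  | nil => simp only [normalForm, wordEval_nil, map_one]; rfl
  | cons t L ih => rw [wordEval_cons, normalForm_eval_mul, ih h.of_cons, rcons_of_reduced h]

theorem len_eq_length_normalForm (g : G23) : len g = (normalForm g).length := by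
  suffices {n | ∃ L, Reduced L ∧ wordEval L = g ∧ L.length = n} = {(normalForm g).length} by
    rw [len, this, csInf_singleton]
  ext n
  constructor
  · rintro ⟨L, hL, rfl, rfl⟩
    rw [normalForm_wordEval hL]; rfl
  · rintro rfl
    exact ⟨_, reduced_normalForm g, wordEval_normalForm g, rfl⟩

theorem len_wordEval {L : List Letter} (h : Reduced L) : len (wordEval L) = L.length := by
  rw [len_eq_length_normalForm, normalForm_wordEval h]

theorem len_wordEval_le (L : List Letter) : len (wordEval L) ≤ L.length := by
  induction L with
  | nil => exact (len_wordEval reduced_nil).le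
  | cons t L ih =>
    rw [wordEval_cons, len_eq_length_normalForm, normalForm_eval_mul, List.length_cons]
    have := length_rcons_le t (normalForm (wordEval L))
    rw [← len_eq_length_normalForm] at this
    omega

theorem len_mul_le (x y : G23) : len (x * y) ≤ len x + len y := by
  simpa [len_eq_length_normalForm, wordEval_normalForm] using
    len_wordEval_le (normalForm x ++ normalForm y)

def invRev (L : List Letter) : List Letter := (L.map Letter.inv).reverse

@[simp]
theorem invRev_nil : invRev [] = [] := rfl

@[simp]
theorem invRev_append (L M : List Letter) : invRev (L ++ M) = invRev M ++ invRev L := by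
  simp [invRev]

@[simp]
theorem invRev_cons (t : Letter) (L : List Letter) : invRev (t :: L) = invRev L ++ [t.inv] := by
  simp [invRev]

@[simp]
theorem length_invRev (L : List Letter) : (invRev L).length = L.length := by simp [invRev]

@[simp]
theorem invRev_invRev (L : List Letter) : invRev (invRev L) = L := by
  simp [invRev, Function.comp_def, Letter.inv_inv]

@[simp]
theorem wordEval_invRev (L : List Letter) : wordEval (invRev L) = (wordEval L)⁻¹ := by
  induction L with
  | nil => simp
  | cons t L ih => simp [ih, Letter.eval_inv]

theorem Reduced.invRev {L : List Letter} (h : Reduced L) : Reduced (invRev L) := by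
  rw [reduced_iff_isChain, _root_.invRev, List.isChain_reverse, List.isChain_map]
  refine h.imp fun x y hxy => ?_
  cases x <;> cases y <;> simp_all [Letter.inv]

theorem len_inv (x : G23) : len x⁻¹ = len x := by
  have key (y : G23) : len y⁻¹ ≤ len y := by
    simpa [wordEval_normalForm, ← len_eq_length_normalForm] using
      len_wordEval_le (invRev (normalForm y))
  exact le_antisymm (key x) (by simpa using key x⁻¹)

theorem len_conj_le (v x : G23) : len (v * x * v⁻¹) ≤ 2 * len v + len x := by
  have := len_mul_le (v * x) v⁻¹
  have := len_mul_le v x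
  rw [len_inv] at *; omega

theorem Reduced.append_rcons {A B : List Letter} {t s : Letter} (hA : Reduced (A ++ [t]))
    (hB : Reduced (s :: B)) (hts : s ≠ t.inv) :
    Reduced (A ++ rcons t (s :: B)) ∧ B.length + 1 ≤ (rcons t (s :: B)).length := by
  by_cases hred : Reduced (t :: s :: B)
  · rw [rcons_of_reduced hred]
    exact ⟨hA.append_cons hred, by simp⟩
  rw [reduced_cons_cons] at hred
  cases t <;> cases s <;> simp_all [Letter.inv, rcons] <;>
    exact (hA.append_cons hB).replace (by decide) (by decide)

/-- The `+ 1` accounts for two powers of `b` merging where the cancellation stops. -/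
theorem exists_cancel {A B : List Letter} (hA : Reduced A) (hB : Reduced B) :
    ∃ S, S <:+ A ∧ invRev S <+: B ∧
      A.length + B.length ≤ len (wordEval A * wordEval B) + 2 * S.length + 1 := by
  induction A using List.reverseRecOn generalizing B with
  | nil => exact ⟨[], List.nil_suffix, List.nil_prefix, by simp [len_wordEval hB]⟩
  | append_singleton A t ih =>
    rcases B with _ | ⟨s, B⟩
    · refine ⟨[], List.nil_suffix, List.nil_prefix, ?_⟩
      rw [wordEval_nil, mul_one, len_wordEval hA]
      simp
    by_cases hts : s = t.inv
    · subst hts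
      obtain ⟨S, hSA, hSB, hlen⟩ := ih hA.of_append_left hB.of_cons
      refine ⟨S ++ [t], List.suffix_append_self_iff.mpr hSA, ?_, ?_⟩
      · simpa using hSB
      · have : wordEval (A ++ [t]) * wordEval (t.inv :: B) = wordEval A * wordEval B := by
          simp [Letter.eval_inv, mul_assoc]
        simp only [this, List.length_append, List.length_cons] at hlen ⊢
        omega
    · obtain ⟨hred, hlen⟩ := Reduced.append_rcons hA hB hts
      refine ⟨[], List.nil_suffix, List.nil_prefix, ?_⟩
      have := len_wordEval hred
      simp only [wordEval_append, wordEval_rcons, wordEval_cons, wordEval_nil, mul_one,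
        ← mul_assoc, List.length_append] at this ⊢
      simp only [List.length_cons, List.length_nil] at hlen ⊢
      omega

theorem len_mul_wordEval_add_le {g : G23} {T U : List Letter} (hTg : T <:+ normalForm g)
    (hTU : invRev T <+: U) : len (g * wordEval U) + 2 * T.length ≤ len g + U.length := by
  obtain ⟨A, hA⟩ := hTg
  obtain ⟨U₁, rfl⟩ := hTU
  have hg : g * wordEval (invRev T ++ U₁) = wordEval (A ++ U₁) := by
    rw [← wordEval_normalForm g, ← hA]
    simp [mul_assoc]
  have := len_wordEval_le (A ++ U₁)
  rw [len_eq_length_normalForm g, ← hA, hg]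
  simp only [List.length_append, length_invRev] at this ⊢
  omega

theorem invRev_prefix_of_len_mul_lt {g h : G23} (hgh : len (g * h) < len h) {T : List Letter}
    (hT : T <:+ normalForm g) (hq : 2 * T.length ≤ len g + 1) : invRev T <+: normalForm h := by
  obtain ⟨S, hSg, hSh, hlen⟩ := exists_cancel (reduced_normalForm g) (reduced_normalForm h)
  simp only [wordEval_normalForm, ← len_eq_length_normalForm] at hlen
  obtain ⟨P, rfl⟩ := List.suffix_of_suffix_length_le hT hSg (by omega)
  exact (List.prefix_append _ _).trans (by simpa using hSh)

def IsLongConjugator (U : List Letter) : Prop := Reduced U ∧ U.getLast? = some .w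

def conjS1 (U : List Letter) : G23 := wordEval U * s1 * (wordEval U)⁻¹

def conjS1Word (U : List Letter) : List Letter := U ++ [.b, .w, .b] ++ invRev U

theorem wordEval_conjS1Word (U : List Letter) : wordEval (conjS1Word U) = conjS1 U := by
  simp [conjS1Word, conjS1, s1, Letter.eval, mul_assoc]

theorem conjS1_rcons (t : Letter) (U : List Letter) :
    conjS1 (rcons t U) = t.eval * conjS1 U * t.eval⁻¹ := by
  simp [conjS1, wordEval_rcons, mul_assoc]

namespace IsLongConjugator

variable {U : List Letter}

theorem ne_nil (hU : IsLongConjugator U) : U ≠ [] := by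
  rintro rfl; simp [IsLongConjugator] at hU

theorem reduced_conjS1Word (hU : IsLongConjugator U) : Reduced (conjS1Word U) := by
  have hinv : (invRev U).head? = some .w := by
    simp [invRev, List.head?_reverse, List.getLast?_map, hU.2, Letter.inv]
  simp only [conjS1Word, reduced_iff_isChain, List.isChain_append, hU.2, hinv]
  exact ⟨⟨hU.1, by decide, by simp⟩, hU.1.invRev, by simp⟩

theorem normalForm_conjS1 (hU : IsLongConjugator U) : normalForm (conjS1 U) = conjS1Word U := by
  rw [← wordEval_conjS1Word, normalForm_wordEval hU.reduced_conjS1Word]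

theorem len_conjS1 (hU : IsLongConjugator U) : len (conjS1 U) = 2 * U.length + 3 := by
  rw [len_eq_length_normalForm, hU.normalForm_conjS1, conjS1Word]
  simp only [List.length_append, List.length_cons, List.length_nil, length_invRev]; omega

theorem rcons (hU : IsLongConjugator U) (t : Letter) (ht : rcons t U ≠ []) :
    IsLongConjugator (rcons t U) := by
  refine ⟨reduced_rcons t hU.1, ?_⟩
  obtain ⟨hred, hlast⟩ := hU
  rcases U with _ | ⟨s, _ | ⟨u, U⟩⟩ <;> cases t <;> try cases s
  all_goals simp_all [_root_.rcons]

theorem pair_prefix (hU : IsLongConjugator U) {t : Letter} (ht : t ≠ .w) (htU : [t] <+: U) :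
    [t, .w] <+: U := by
  obtain ⟨_ | ⟨s, U'⟩, rfl⟩ := htU
  · simp [IsLongConjugator, ht] at hU
  · have := (reduced_cons_cons.mp hU.1).1
    cases s <;> simp_all

end IsLongConjugator

def S1Shape (g : G23) : Prop := g ∈ shortSet ∨ ∃ U, IsLongConjugator U ∧ g = conjS1 U

theorem S1Shape.conj_eval {g : G23} (hg : S1Shape g) (t : Letter) :
    S1Shape (t.eval * g * t.eval⁻¹) := by
  rcases hg with hs | ⟨U, hU, rfl⟩
  · rcases hs with rfl | rfl | rfl <;> cases t
    all_goals try (left; simp [shortSet, s0, s1, s2, Letter.eval, mul_assoc]; done)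
    exact .inr ⟨[.w], ⟨reduced_singleton _, rfl⟩, by simp [conjS1, Letter.eval]⟩
  rw [← conjS1_rcons]
  by_cases ht : rcons t U = []
  · exact .inl (by simp [ht, conjS1, shortSet])
  · exact .inr ⟨_, hU.rcons t ht, rfl⟩

theorem S1Shape.of_isConj {g : G23} (hg : IsConj s1 g) : S1Shape g := by
  obtain ⟨c, rfl⟩ := isConj_iff.mp hg
  rw [← wordEval_normalForm c]
  induction normalForm c with
  | nil => exact .inl (by simp [shortSet])
  | cons t L ih => simpa [mul_assoc] using ih.conj_eval t

theorem normalForm_s0 : normalForm s0 = [.w, .b2] := by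
  rw [← normalForm_wordEval (L := [.w, .b2]) (by simp [reduced_cons_cons, reduced_singleton])]
  simp [s0, Letter.eval]

theorem normalForm_s1 : normalForm s1 = [.b, .w, .b] := by
  rw [← normalForm_wordEval (L := [.b, .w, .b]) (by simp [reduced_cons_cons, reduced_singleton])]
  simp [s1, Letter.eval, mul_assoc]

theorem normalForm_s2 : normalForm s2 = [.b2, .w] := by
  rw [← normalForm_wordEval (L := [.b2, .w]) (by simp [reduced_cons_cons, reduced_singleton])]
  simp [s2, Letter.eval]

theorem len_le_three_of_mem_shortSet {g : G23} (hg : g ∈ shortSet) : len g ≤ 3 := by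
  rcases hg with rfl | rfl | rfl <;>
    simp [len_eq_length_normalForm, normalForm_s0, normalForm_s1, normalForm_s2]

theorem S1Shape.five_le_len {g : G23} (hg : S1Shape g) (hs : g ∉ shortSet) : 5 ≤ len g := by
  obtain hs' | ⟨U, hU, rfl⟩ := hg
  · exact absurd hs' hs
  · have := List.length_pos_iff.mpr hU.ne_nil
    rw [hU.len_conjS1]; omega

theorem S1Shape.exists_of_three_lt_len {g : G23} (hg : S1Shape g) (hlen : 3 < len g) :
    ∃ U, IsLongConjugator U ∧ g = conjS1 U :=
  hg.resolve_left fun hs => by have := len_le_three_of_mem_shortSet hs; omega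

namespace IsLongConjugator

variable {U : List Letter}

theorem prefix_of_prefix_normalForm (hU : IsLongConjugator U) {P : List Letter}
    (hP : P <+: normalForm (conjS1 U)) (hlen : P.length ≤ U.length) : P <+: U :=
  List.prefix_of_prefix_length_le hP
    (by rw [hU.normalForm_conjS1, conjS1Word, List.append_assoc]; exact List.prefix_append _ _)
    hlen

theorem len_mul_wordEval_lt_of_suffix (hU : IsLongConjugator U) {g : G23}
    (hgh : len (g * conjS1 U) < len (conjS1 U)) {t : Letter} (ht : t ≠ .w)
    (hsuf : [.w, t] <:+ normalForm g) (hlen : len g ≤ 3) : len (g * wordEval U) < U.length := by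
  have h2 : 2 ≤ len g := by rw [len_eq_length_normalForm]; exact hsuf.length_le
  have hinv : [t.inv] <+: U := by
    refine hU.prefix_of_prefix_normalForm ?_ (List.length_pos_iff.mpr hU.ne_nil)
    simpa using invRev_prefix_of_len_mul_lt hgh ((List.suffix_cons _ _).trans hsuf)
      (by simp only [List.length_singleton]; omega)
  have hpair := hU.pair_prefix (by cases t <;> simp_all [Letter.inv]) hinv
  have := len_mul_wordEval_add_le hsuf (by simpa [Letter.inv] using hpair)
  simp only [List.length_cons, List.length_nil] at this; omega

theorem len_s2_mul_wordEval_lt (hU : IsLongConjugator U)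
    (hgh : len (s2 * conjS1 U) < len (conjS1 U)) (hne : U ≠ [.w]) :
    len (s2 * wordEval U) < U.length := by
  have hw : [.w] <+: U := by
    refine hU.prefix_of_prefix_normalForm ?_ (List.length_pos_iff.mpr hU.ne_nil)
    simpa [Letter.inv] using invRev_prefix_of_len_mul_lt hgh (T := [.w])
      (by simp [normalForm_s2]) (by simp [len_eq_length_normalForm, normalForm_s2])
  obtain ⟨U', rfl⟩ := hw
  simp only [List.singleton_append] at *
  obtain _ | ⟨s, U'⟩ := U'
  · exact absurd rfl hne
  have hs := (reduced_cons_cons.mp hU.1).1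
  cases s
  · simp at hs
  · have := len_mul_wordEval_add_le (g := s2) (T := [.b2, .w]) (U := .w :: .b :: U')
      (by simp [normalForm_s2]) (by simp [Letter.inv])
    rw [len_eq_length_normalForm s2, normalForm_s2] at this
    simp only [List.length_cons, List.length_nil] at this ⊢; omega
  · have hmerge : s2 * wordEval (.w :: .b2 :: U') = wordEval (.b :: U') := by
      simp [s2, Letter.eval, mul_assoc]
    have := len_wordEval_le (.b :: U')
    rw [hmerge]; simp only [List.length_cons] at this ⊢; omega


variable {V : List Letter}

/-- The suffix `w b V⁻¹` of the first word cancels, so `V b² w` is a prefix of the second word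
`U b w b U⁻¹`; if `|U| ≤ |V| + 1` this puts `b²` or `w` where that word has its middle `b`. -/
theorem prefix_of_len_mul_lt (hV : IsLongConjugator V) (hU : IsLongConjugator U)
    (hle : V.length ≤ U.length) (hgh : len (conjS1 V * conjS1 U) < len (conjS1 U)) :
    V ++ [.b2, .w] <+: U := by
  have hsuf : [.w, .b] ++ invRev V <:+ normalForm (conjS1 V) := by
    rw [hV.normalForm_conjS1]; exact ⟨V ++ [.b], by simp [conjS1Word]⟩
  have hpre := invRev_prefix_of_len_mul_lt hgh hsuf (by
    rw [hV.len_conjS1]; simp only [List.length_append, List.length_cons, List.length_nil,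
      length_invRev]; omega)
  simp only [invRev_invRev, invRev_cons, List.nil_append, List.cons_append, Letter.inv] at hpre
  by_cases hlen : V.length + 2 ≤ U.length
  · exact hU.prefix_of_prefix_normalForm (by simpa using hpre) (by simpa using hlen)
  rw [hU.normalForm_conjS1, conjS1Word] at hpre
  have := hpre.getElem (i := U.length)
    (by simp only [List.length_append, List.length_cons, List.length_nil]; omega)
  obtain h | h : U.length = V.length ∨ U.length = V.length + 1 := by omega
  all_goals simp [h] at this

theorem len_conjS1_mul_wordEval_lt (hV : IsLongConjugator V) (hU : IsLongConjugator U)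
    (hlt : V.length < U.length) (hgh : len (conjS1 V * conjS1 U) < len (conjS1 U)) :
    len (conjS1 V * wordEval U) < U.length := by
  have hsuf : [.w, .b] ++ invRev V <:+ normalForm (conjS1 V) := by
    rw [hV.normalForm_conjS1]; exact ⟨V ++ [.b], by simp [conjS1Word]⟩
  have := len_mul_wordEval_add_le hsuf
    (by simpa [Letter.inv] using hV.prefix_of_len_mul_lt hU hlt.le hgh)
  rw [hV.len_conjS1] at this
  simp only [List.length_append, List.length_cons, List.length_nil, length_invRev] at this; omega

theorem len_mul_wordEval_lt_of_mem_shortSet (hU : IsLongConjugator U) {g : G23}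
    (hg : g ∈ shortSet) (hgh : len (g * conjS1 U) < len (conjS1 U)) (hne : ¬(g = s2 ∧ U = [.w])) :
    len (g * wordEval U) < U.length := by
  have hg3 := len_le_three_of_mem_shortSet hg
  rcases hg with rfl | rfl | rfl
  · exact hU.len_mul_wordEval_lt_of_suffix hgh (t := .b2) (by decide) (by simp [normalForm_s0]) hg3
  · exact hU.len_mul_wordEval_lt_of_suffix hgh (t := .b) (by decide)
      (by rw [normalForm_s1]; exact List.suffix_cons _ _) hg3
  · exact hU.len_s2_mul_wordEval_lt hgh fun h => hne ⟨rfl, h⟩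

theorem len_conj_lt (hU : IsLongConjugator U) {g : G23}
    (hg : IsConj s1 g) (hlen : len g < len (conjS1 U))
    (hgh : len (g * conjS1 U) < len (conjS1 U)) :
    len (g * conjS1 U * g⁻¹) < len (conjS1 U) := by
  by_cases hspecial : g = s2 ∧ U = [.w]
  · -- here `gU = b²` is not shorter than `U = w`, but `ghg⁻¹ = s₀`
    obtain ⟨rfl, rfl⟩ := hspecial
    have hconj : s2 * conjS1 [.w] * s2⁻¹ = s0 := by
      simp [conjS1, s0, s1, s2, Letter.eval, mul_assoc]
    have := len_le_three_of_mem_shortSet (g := s0) (by simp [shortSet])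
    rw [hconj, hU.len_conjS1, List.length_singleton]; omega
  suffices len (g * wordEval U) < U.length by
    have hconj : g * conjS1 U * g⁻¹ = g * wordEval U * s1 * (g * wordEval U)⁻¹ := by
      simp [conjS1, mul_assoc]
    have := len_conj_le (g * wordEval U) s1
    have := len_le_three_of_mem_shortSet (g := s1) (by simp [shortSet])
    rw [hconj, hU.len_conjS1]; omega
  rcases S1Shape.of_isConj hg with hs | ⟨V, hV, rfl⟩
  · exact hU.len_mul_wordEval_lt_of_mem_shortSet hs hgh hspecial
  · rw [hV.len_conjS1, hU.len_conjS1] at hlen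
    exact hV.len_conjS1_mul_wordEval_lt hU (by omega) hgh

end IsLongConjugator

theorem len_conj_lt_of_len_mul_lt {g h : G23} (hg : IsConj s1 g) (hh : IsConj s1 h)
    (h3 : 3 < len h) (hlen : len g < len h) (hgh : len (g * h) < len h) :
    len (g * h * g⁻¹) < len h := by
  obtain ⟨U, hU, rfl⟩ := (S1Shape.of_isConj hh).exists_of_three_lt_len h3
  exact hU.len_conj_lt hg hlen hgh

theorem len_ne_of_len_mul_lt {g h : G23} (hg : IsConj s1 g) (hh : IsConj s1 h)
    (h3 : 3 < len h) (hgh : len (g * h) < len h) : len g ≠ len h := by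
  intro heq
  obtain ⟨U, hU, rfl⟩ := (S1Shape.of_isConj hh).exists_of_three_lt_len h3
  obtain ⟨V, hV, rfl⟩ := (S1Shape.of_isConj hg).exists_of_three_lt_len (heq ▸ h3)
  rw [hV.len_conjS1, hU.len_conjS1] at heq
  have := (hV.prefix_of_len_mul_lt hU (by omega) hgh).length_le
  simp only [List.length_append, List.length_cons, List.length_nil] at this; omega

/-- The anti-automorphism of `G23` fixing `w` and `b`; it reverses words. -/
def rev (g : G23) : G23 := (Monoid.Coprod.map (MonoidHom.id _) invMonoidHom g)⁻¹

theorem rev_mul (x y : G23) : rev (x * y) = rev y * rev x := by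
  simp [rev]

theorem rev_inv (x : G23) : rev x⁻¹ = (rev x)⁻¹ := by
  simp [rev]

theorem rev_eval (t : Letter) : rev t.eval = t.eval := by
  have hw : rev w = w := by
    rw [rev, w, Monoid.Coprod.map_apply_inl, MonoidHom.id_apply]; exact w_inv
  have hb : rev b = b := by simp [rev, b]
  cases t
  · exact hw
  · exact hb
  · rw [Letter.eval, pow_two, rev_mul, hb]

theorem rev_wordEval (L : List Letter) : rev (wordEval L) = wordEval L.reverse := by
  induction L with
  | nil => simp [rev]
  | cons t L ih => simp [rev_mul, ih, rev_eval]

theorem rev_rev (g : G23) : rev (rev g) = g := by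
  rw [← wordEval_normalForm g, rev_wordEval, rev_wordEval, List.reverse_reverse]

theorem len_rev (g : G23) : len (rev g) = len g := by
  have key (x : G23) : len (rev x) ≤ len x := by
    have := len_wordEval_le (normalForm x).reverse
    rwa [List.length_reverse, ← len_eq_length_normalForm, ← rev_wordEval,
      wordEval_normalForm] at this
  exact le_antisymm (key g) (by simpa [rev_rev] using key (rev g))

theorem IsConj.rev {g : G23} (hg : IsConj s1 g) : IsConj s1 (rev g) := by
  obtain ⟨c, rfl⟩ := isConj_iff.mp hg
  have hs1 : _root_.rev s1 = s1 := by
    simpa [s1, Letter.eval, mul_assoc] using rev_wordEval [.b, .w, .b]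
  exact isConj_iff.mpr ⟨(_root_.rev c)⁻¹, by simp [rev_mul, rev_inv, hs1, mul_assoc]⟩

/-- **Lemma (Friedman–Morgan 4.15).**  If `g, h` are conjugates of `s₁` with
`l(gh) < max(l(g), l(h))` and at least one of them long, then `l(g) ≠ l(h)`; if
`l(g) < l(h)` then `g' = ghg⁻¹`, `h' = g` are conjugates of `s₁` with `g'h' = gh` and
`l(g') + l(h') < l(g) + l(h)`; if `l(h) < l(g)` the same holds for `g' = h`,
`h' = h⁻¹gh`. -/
theorem not_join_well_lemma (g h : G23) (hg : IsConj s1 g) (hh : IsConj s1 h)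
    (hlong : g ∉ shortSet ∨ h ∉ shortSet)
    (hlt : len (g * h) < max (len g) (len h)) :
    len g ≠ len h ∧
    (len g < len h →
      IsConj s1 (g * h * g⁻¹) ∧ IsConj s1 g ∧
      (g * h * g⁻¹) * g = g * h ∧
      len (g * h * g⁻¹) + len g < len g + len h) ∧
    (len h < len g →
      IsConj s1 h ∧ IsConj s1 (h⁻¹ * g * h) ∧
      h * (h⁻¹ * g * h) = g * h ∧
      len h + len (h⁻¹ * g * h) < len g + len h) := by
  have h3 : 3 < max (len g) (len h) := by
    rcases hlong with hs | hs
    · exact lt_max_of_lt_left (by have := (S1Shape.of_isConj hg).five_le_len hs; omega)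
    · exact lt_max_of_lt_right (by have := (S1Shape.of_isConj hh).five_le_len hs; omega)
  refine ⟨fun heq => ?_, fun hgh => ?_, fun hhg => ?_⟩
  · rw [heq, max_self] at hlt h3
    exact len_ne_of_len_mul_lt hg hh h3 hlt heq
  · rw [max_eq_right hgh.le] at hlt h3
    have := len_conj_lt_of_len_mul_lt hg hh h3 hgh hlt
    exact ⟨hh.trans (isConj_iff.mpr ⟨g, rfl⟩), hg, by group, by omega⟩
  · rw [max_eq_left hhg.le] at hlt h3
    have := len_conj_lt_of_len_mul_lt hh.rev hg.rev (by rwa [len_rev]) (by rwa [len_rev, len_rev])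
      (by rwa [← rev_mul, len_rev, len_rev])
    rw [← rev_inv, ← rev_mul, ← rev_mul, ← mul_assoc, len_rev, len_rev] at this
    exact ⟨hh, hg.trans (isConj_iff.mpr ⟨h⁻¹, by group⟩), by group, by omega⟩
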